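/- Under the hole-punching graph-cluster randomization design with 0 < p_t < 1 and 0 < p_hp < 1, suppose all potential outcomes are non-negative: Y_i(t) ≥ 0 for all units i and t ∈ {0,1}. Let τ̂ = μ̂(1) − μ̂(0) and define the plug-in variance estimator V̂ar[τ̂] = V̂ar[μ̂(1)] + V̂ar[μ̂(0)] − 2·Ĉov[μ̂(1), μ̂(0)], where V̂ar[μ̂(t)] is the unbiased cluster-form variance estimator (1/N²)·[ (1/p(t)² − 1/p(t,t))·Σ_{c∈𝒞} Ŝ_c(t,t) + (1/p(t,t) − 1/p(t))·Q̂(t,t) ] and Ĉov[μ̂(1), μ̂(0)] is the cluster-form covariance estimator (1/N²)·[ (1/(p(1)·p(0)) − 1/p(1,0))·Σ_{c∈𝒞} Ŝ_c(1,0) − Q̂(1,1)/(2·p(1)) − Q̂(0,0)/(2·p(0)) ], with Ŝ_c(t1,t2) = Σ_{i∈c: Z_i=t1} Σ_{j∈c: Z_j=t2} Y_i(t1)·Y_j(t2) and Q̂(t,t) = Σ_{i: Z_i=t} Y_i(t)². Then the estimator is conservative: E[V̂ar[τ̂]] ≥ Var[τ̂]. -/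

import Mathlib

open MeasureTheory ProbabilityTheory

/-- The Bernoulli measure on `Bool` with success probability `p`. -/
noncomputable def boolBernoulliMeasure (p : ℝ) : Measure Bool :=
  ENNReal.ofReal p • Measure.dirac true + ENNReal.ofReal (1 - p) • Measure.dirac false

instance boolBernoulliMeasure.instIsFiniteMeasure (p : ℝ) :
    IsFiniteMeasure (boolBernoulliMeasure p) where
  measure_univ_lt_top := by
    simp [boolBernoulliMeasure]

/-- The hole-punching graph-cluster randomization design measure on the product space
`(C → Bool) × (Fin N → Bool)`: i.i.d. Bernoulli(`pt`) cluster-level assignments and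
i.i.d. Bernoulli(`php`) unit-level flips, all mutually independent. -/
noncomputable def designMeasure (C : Type*) [Fintype C] (N : ℕ) (pt php : ℝ) :
    Measure ((C → Bool) × (Fin N → Bool)) :=
  (Measure.pi fun _ : C => boolBernoulliMeasure pt).prod
    (Measure.pi fun _ : Fin N => boolBernoulliMeasure php)

/-- The treatment `Z_i` of unit `i`: cluster assignment XOR individual flip. -/
def treat {C : Type*} {N : ℕ} (c : Fin N → C) (i : Fin N)
    (ω : (C → Bool) × (Fin N → Bool)) : Bool :=
  xor (ω.1 (c i)) (ω.2 i)

/-- The marginal propensity `p_i(t) = Pr(Z_i = t)`. -/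
noncomputable def margProp {C : Type*} [Fintype C] {N : ℕ} (pt php : ℝ) (c : Fin N → C)
    (i : Fin N) (t : Bool) : ℝ :=
  (designMeasure C N pt php {ω | treat c i ω = t}).toReal

/-- The joint propensity `p_{ij}(t₁,t₂) = Pr(Z_i = t₁ ∧ Z_j = t₂)`. -/
noncomputable def jointProp {C : Type*} [Fintype C] {N : ℕ} (pt php : ℝ) (c : Fin N → C)
    (i j : Fin N) (t1 t2 : Bool) : ℝ :=
  (designMeasure C N pt php {ω | treat c i ω = t1 ∧ treat c j ω = t2}).toReal

/-- The Horvitz–Thompson estimator `μ̂(t)`. -/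
noncomputable def htEst {C : Type*} [Fintype C] {N : ℕ} (pt php : ℝ) (c : Fin N → C)
    (Y : Fin N → Bool → ℝ) (t : Bool) (ω : (C → Bool) × (Fin N → Bool)) : ℝ :=
  (1 / (N : ℝ)) * ∑ i, if treat c i ω = t then Y i t / margProp pt php c i t else 0

/-- The realized within-cluster sum `Ŝ_c(t1,t2) = Σ_{i∈c: Z_i=t1} Σ_{j∈c: Z_j=t2} Y_i(t1)·Y_j(t2)`
for cluster `k`, as a function of the random assignment `ω`. -/
noncomputable def Shat {C : Type*} [DecidableEq C] {N : ℕ} (c : Fin N → C)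
    (Y : Fin N → Bool → ℝ) (t1 t2 : Bool) (k : C)
    (ω : (C → Bool) × (Fin N → Bool)) : ℝ :=
  ∑ i ∈ Finset.univ.filter (fun i => c i = k ∧ treat c i ω = t1),
    ∑ j ∈ Finset.univ.filter (fun j => c j = k ∧ treat c j ω = t2), Y i t1 * Y j t2

/-- The realized diagonal sum `Q̂(t,t) = Σ_{i: Z_i=t} Y_i(t)²`, as a function of the random
assignment `ω`. -/
noncomputable def Qhat {C : Type*} {N : ℕ} (c : Fin N → C)
    (Y : Fin N → Bool → ℝ) (t : Bool) (ω : (C → Bool) × (Fin N → Bool)) : ℝ :=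
  ∑ i ∈ Finset.univ.filter (fun i => treat c i ω = t), Y i t ^ 2

/-- The cluster-form variance estimator
`V̂ar[μ̂(t)] = (1/N²)·[(1/p(t)² − 1/p(t,t))·Σ_c Ŝ_c(t,t) + (1/p(t,t) − 1/p(t))·Q̂(t,t)]`. -/
noncomputable def varHat {C : Type*} [Fintype C] [DecidableEq C] {N : ℕ} (c : Fin N → C)
    (Y : Fin N → Bool → ℝ) (p : Bool → ℝ) (pj : Bool → Bool → ℝ) (t : Bool)
    (ω : (C → Bool) × (Fin N → Bool)) : ℝ :=
  (1 / (N : ℝ) ^ 2) *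
    ((1 / (p t) ^ 2 - 1 / pj t t) * (∑ k : C, Shat c Y t t k ω)
      + (1 / pj t t - 1 / p t) * Qhat c Y t ω)

/-- The cluster-form covariance estimator
`Ĉov[μ̂(t1),μ̂(t2)] = (1/N²)·[(1/(p(t1)·p(t2)) − 1/p(t1,t2))·Σ_c Ŝ_c(t1,t2)
− Q̂(t1,t1)/(2·p(t1)) − Q̂(t2,t2)/(2·p(t2))]`. -/
noncomputable def covHat {C : Type*} [Fintype C] [DecidableEq C] {N : ℕ} (c : Fin N → C)
    (Y : Fin N → Bool → ℝ) (p : Bool → ℝ) (pj : Bool → Bool → ℝ) (t1 t2 : Bool)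
    (ω : (C → Bool) × (Fin N → Bool)) : ℝ :=
  (1 / (N : ℝ) ^ 2) *
    ((1 / (p t1 * p t2) - 1 / pj t1 t2) * (∑ k : C, Shat c Y t1 t2 k ω)
      - Qhat c Y t1 ω / (2 * p t1) - Qhat c Y t2 ω / (2 * p t2))

/-- The covariance of two real random variables: `Cov[X,Y] = E[(X − E X)(Y − E Y)]`. -/
noncomputable def cov {Ω : Type*} [MeasurableSpace Ω] (P : Measure Ω) (X Y : Ω → ℝ) : ℝ :=
  ∫ ω, (X ω - ∫ x, X x ∂P) * (Y ω - ∫ x, Y x ∂P) ∂P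

/-! Expanding the true (co)variances of the Horvitz–Thompson estimators and the expectations of
the plug-in estimators as double sums over pairs of units, the comparison is pair by pair.
Units in different clusters are treated independently, so such pairs contribute nothing to either
side. For distinct units of one cluster the weight `1/(p(t₁)p(t₂)) − 1/p(t₁,t₂)` turns the
expected `Ŝ`-contribution `Y_i Y_j p(t₁,t₂)` into the covariance contribution
`Y_i Y_j (p(t₁,t₂)/(p(t₁)p(t₂)) − 1)`, because `p(t₁,t₂) > 0`. Hence `V̂ar[μ̂(t)]` is unbiased,
and the only bias sits on the diagonal of `Ĉov`, where `Z_i` cannot take both values: there the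
estimator contributes `−(Y_i(1)² + Y_i(0)²)/2 ≤ −Y_i(1)·Y_i(0)`. Altogether
`E[V̂ar[τ̂]] − Var[τ̂] = N⁻² Σ_i (Y_i(1) − Y_i(0))² ≥ 0`. -/

open Finset

lemma isProbabilityMeasure_boolBernoulliMeasure {p : ℝ} (h0 : 0 ≤ p) (h1 : p ≤ 1) :
    IsProbabilityMeasure (boolBernoulliMeasure p) := by
  constructor
  simp [boolBernoulliMeasure, ← ENNReal.ofReal_add h0 (sub_nonneg.2 h1)]

lemma boolBernoulliMeasure_singleton_ne_zero {p : ℝ} (hp : p ∈ Set.Ioo 0 1) (b : Bool) :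
    boolBernoulliMeasure p {b} ≠ 0 := by
  cases b <;> simp [boolBernoulliMeasure, hp.1, hp.2]

lemma covariance_indicator_const {Ω : Type*} [MeasurableSpace Ω] {P : Measure Ω}
    [IsProbabilityMeasure P] {A B : Set Ω} (hA : MeasurableSet A) (hB : MeasurableSet B)
    (a b : ℝ) :
    cov[A.indicator fun _ => a, B.indicator fun _ => b; P]
      = a * b * (P.real (A ∩ B) - P.real A * P.real B) := by
  rw [covariance_eq_sub (memLp_indicator_const 2 hA a (.inr (measure_ne_top _ _)))
    (memLp_indicator_const 2 hB b (.inr (measure_ne_top _ _))), Pi.mul_def]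
  simp_rw [← Set.inter_indicator_mul]
  rw [integral_indicator_const _ (hA.inter hB), integral_indicator_const _ hA,
    integral_indicator_const _ hB, smul_eq_mul, smul_eq_mul, smul_eq_mul]
  ring

section Design

variable {C : Type*} [Fintype C] {N : ℕ} {pt php : ℝ}

instance isFiniteMeasure_designMeasure : IsFiniteMeasure (designMeasure C N pt php) := by
  unfold designMeasure
  infer_instance

lemma isProbabilityMeasure_designMeasure (hpt : pt ∈ Set.Icc 0 1) (hphp : php ∈ Set.Icc 0 1) :
    IsProbabilityMeasure (designMeasure C N pt php) := by
  have := isProbabilityMeasure_boolBernoulliMeasure hpt.1 hpt.2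
  have := isProbabilityMeasure_boolBernoulliMeasure hphp.1 hphp.2
  unfold designMeasure
  infer_instance

lemma designMeasure_ne_zero_of_nonempty (hpt : pt ∈ Set.Ioo 0 1) (hphp : php ∈ Set.Ioo 0 1)
    {s : Set ((C → Bool) × (Fin N → Bool))} (hs : s.Nonempty) :
    designMeasure C N pt php s ≠ 0 := by
  obtain ⟨ω, hω⟩ := hs
  intro h
  have hω0 := measure_mono_null (Set.singleton_subset_iff.2 hω) h
  rw [designMeasure, ← Set.singleton_prod_singleton, Measure.prod_prod,
    ← Set.univ_pi_singleton ω.1, ← Set.univ_pi_singleton ω.2, Measure.pi_pi,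
    Measure.pi_pi] at hω0
  exact mul_ne_zero (prod_ne_zero_iff.2 fun _ _ => boolBernoulliMeasure_singleton_ne_zero hpt _)
    (prod_ne_zero_iff.2 fun _ _ => boolBernoulliMeasure_singleton_ne_zero hphp _) hω0

lemma iIndepFun_designMeasure (hpt : pt ∈ Set.Icc 0 1) (hphp : php ∈ Set.Icc 0 1) :
    iIndepFun (fun (s : C ⊕ Fin N) (ω : (C → Bool) × (Fin N → Bool)) => Sum.elim ω.1 ω.2 s)
      (designMeasure C N pt php) := by
  set μ : C ⊕ Fin N → Measure Bool :=
    Sum.elim (fun _ => boolBernoulliMeasure pt) (fun _ => boolBernoulliMeasure php)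
  have hμ : ∀ s, IsProbabilityMeasure (μ s) := by
    rintro (_ | _)
    · exact isProbabilityMeasure_boolBernoulliMeasure hpt.1 hpt.2
    · exact isProbabilityMeasure_boolBernoulliMeasure hphp.1 hphp.2
  have hmap : (designMeasure C N pt php).map (fun ω s => Sum.elim ω.1 ω.2 s) = Measure.pi μ :=
    (measurePreserving_sumPiEquivProdPi_symm μ).map_eq
  have := isProbabilityMeasure_designMeasure (C := C) (N := N) hpt hphp
  rw [iIndepFun_iff_map_fun_eq_pi_map (fun _ => Measurable.of_discrete.aemeasurable), hmap]
  congr 1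
  funext s
  rw [← (measurePreserving_eval μ s).map_eq, ← hmap,
    Measure.map_map Measurable.of_discrete Measurable.of_discrete]
  rfl

variable (c : Fin N → C)

lemma indepFun_treat (hpt : pt ∈ Set.Icc 0 1) (hphp : php ∈ Set.Icc 0 1) {i j : Fin N}
    (hcc : c i ≠ c j) : IndepFun (treat c i) (treat c j) (designMeasure C N pt php) := by
  have hij : i ≠ j := fun h => hcc (congrArg c h)
  have hcoords := (iIndepFun_designMeasure hpt hphp).indepFun_prodMk_prodMk
    (fun _ => Measurable.of_discrete) (.inl (c i)) (.inr i) (.inl (c j)) (.inr j)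
    (by simpa using hcc) (by simp) (by simp) (by simpa using hij)
  exact hcoords.comp (φ := fun b => xor b.1 b.2) (ψ := fun b => xor b.1 b.2)
    Measurable.of_discrete Measurable.of_discrete

lemma jointProp_eq_mul_of_cluster_ne (hpt : pt ∈ Set.Icc 0 1) (hphp : php ∈ Set.Icc 0 1)
    {i j : Fin N} (hcc : c i ≠ c j) (t1 t2 : Bool) :
    jointProp pt php c i j t1 t2 = margProp pt php c i t1 * margProp pt php c j t2 := by
  rw [jointProp, margProp, margProp, ← ENNReal.toReal_mul]
  exact congrArg ENNReal.toReal ((indepFun_treat c hpt hphp hcc).measure_inter_preimage_eq_mul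
    _ _ (measurableSet_singleton t1) (measurableSet_singleton t2))

lemma jointProp_self (i : Fin N) (t1 t2 : Bool) :
    jointProp pt php c i i t1 t2 = if t1 = t2 then margProp pt php c i t1 else 0 := by
  split_ifs with h
  · simp [jointProp, margProp, h]
  · have : {ω : (C → Bool) × (Fin N → Bool) | treat c i ω = t1 ∧ treat c i ω = t2} = ∅ :=
      Set.eq_empty_of_forall_notMem fun ω hω => h (hω.1.symm.trans hω.2)
    simp [jointProp, this]

lemma margProp_pos (hpt : pt ∈ Set.Ioo 0 1) (hphp : php ∈ Set.Ioo 0 1) (i : Fin N)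
    (t : Bool) : 0 < margProp pt php c i t := by
  refine ENNReal.toReal_pos (designMeasure_ne_zero_of_nonempty hpt hphp
    ⟨(fun _ => false, fun _ => t), ?_⟩) (measure_ne_top _ _)
  simp [treat]

lemma jointProp_pos (hpt : pt ∈ Set.Ioo 0 1) (hphp : php ∈ Set.Ioo 0 1) {i j : Fin N}
    (hij : i ≠ j) (t1 t2 : Bool) : 0 < jointProp pt php c i j t1 t2 := by
  refine ENNReal.toReal_pos (designMeasure_ne_zero_of_nonempty hpt hphp
    ⟨(fun _ => false, fun k => if k = j then t2 else t1), ?_⟩) (measure_ne_top _ _)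
  simp [treat, hij]

end Design

section Estimators

variable {C : Type*} [Fintype C] {N : ℕ} {pt php : ℝ} (c : Fin N → C)
  (Y : Fin N → Bool → ℝ)

lemma htEst_eq_sum_indicator (t : Bool) :
    htEst pt php c Y t = fun ω => 1 / (N : ℝ) *
      ∑ i, {ω | treat c i ω = t}.indicator (fun _ => Y i t / margProp pt php c i t) ω := by
  funext ω
  simp only [htEst, Set.indicator_apply, Set.mem_ofPred_eq]

lemma covariance_htEst (hpt : pt ∈ Set.Icc 0 1) (hphp : php ∈ Set.Icc 0 1) (t1 t2 : Bool) :
    cov[htEst pt php c Y t1, htEst pt php c Y t2; designMeasure C N pt php]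
      = (1 / (N : ℝ)) ^ 2 * ∑ i, ∑ j,
          Y i t1 / margProp pt php c i t1 * (Y j t2 / margProp pt php c j t2)
            * (jointProp pt php c i j t1 t2
              - margProp pt php c i t1 * margProp pt php c j t2) := by
  have := isProbabilityMeasure_designMeasure (C := C) (N := N) hpt hphp
  rw [htEst_eq_sum_indicator, htEst_eq_sum_indicator, covariance_const_mul_left,
    covariance_const_mul_right, covariance_fun_sum_fun_sum (fun _ => MemLp.of_discrete)
      (fun _ => MemLp.of_discrete), ← mul_assoc, ← sq]
  simp only [covariance_indicator_const MeasurableSet.of_discrete MeasurableSet.of_discrete]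
  rfl

lemma sum_Shat_eq [DecidableEq C] (t1 t2 : Bool) (ω : (C → Bool) × (Fin N → Bool)) :
    ∑ k, Shat c Y t1 t2 k ω = ∑ i, ∑ j, if c i = c j then
      {ω | treat c i ω = t1 ∧ treat c j ω = t2}.indicator (fun _ => Y i t1 * Y j t2) ω
      else 0 := by
  simp only [Shat, sum_filter]
  rw [sum_comm]
  refine sum_congr rfl fun i _ => ?_
  simp only [ite_and, sum_ite_eq, mem_univ, if_true]
  by_cases h : treat c i ω = t1 <;> simp [h, Set.indicator_apply, @eq_comm C]

lemma integral_sum_Shat [DecidableEq C] (t1 t2 : Bool) :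
    ∫ ω, ∑ k, Shat c Y t1 t2 k ω ∂designMeasure C N pt php
      = ∑ i, ∑ j, if c i = c j then Y i t1 * Y j t2 * jointProp pt php c i j t1 t2 else 0 := by
  simp only [sum_Shat_eq]
  rw [integral_finsetSum _ fun _ _ => Integrable.of_finite]
  refine sum_congr rfl fun i _ => ?_
  rw [integral_finsetSum _ fun _ _ => Integrable.of_finite]
  refine sum_congr rfl fun j _ => ?_
  split_ifs
  · rw [integral_indicator_const _ MeasurableSet.of_discrete, smul_eq_mul, mul_comm]
    rfl
  · exact integral_zero _ _

lemma integral_Qhat (t : Bool) :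
    ∫ ω, Qhat c Y t ω ∂designMeasure C N pt php = ∑ i, Y i t ^ 2 * margProp pt php c i t := by
  have hQ : Qhat c Y t = fun ω => ∑ i, {ω | treat c i ω = t}.indicator (fun _ => Y i t ^ 2) ω := by
    funext ω
    simp only [Qhat, sum_filter, Set.indicator_apply, Set.mem_ofPred_eq]
  rw [hQ, integral_finsetSum _ fun _ _ => Integrable.of_finite]
  refine sum_congr rfl fun i _ => ?_
  rw [integral_indicator_const _ MeasurableSet.of_discrete, smul_eq_mul, mul_comm]
  rfl

end Estimators

section Conservative

variable {C : Type*} [Fintype C] [DecidableEq C] {N : ℕ} {pt php : ℝ} {c : Fin N → C}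
  {Y : Fin N → Bool → ℝ} {p : Bool → ℝ} {pj : Bool → Bool → ℝ}

lemma clusterPairTerm_eq_of_ne (hpt : pt ∈ Set.Ioo 0 1) (hphp : php ∈ Set.Ioo 0 1)
    (hp : ∀ i t, margProp pt php c i t = p t)
    (hpj : ∀ i j t1 t2, i ≠ j → c i = c j → jointProp pt php c i j t1 t2 = pj t1 t2)
    {i j : Fin N} (hij : i ≠ j) (t1 t2 : Bool) :
    (1 / (p t1 * p t2) - 1 / pj t1 t2)
        * (if c i = c j then Y i t1 * Y j t2 * jointProp pt php c i j t1 t2 else 0)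
      = Y i t1 / p t1 * (Y j t2 / p t2) * (jointProp pt php c i j t1 t2 - p t1 * p t2) := by
  have h1 : p t1 ≠ 0 := hp i t1 ▸ (margProp_pos c hpt hphp i t1).ne'
  have h2 : p t2 ≠ 0 := hp j t2 ▸ (margProp_pos c hpt hphp j t2).ne'
  split_ifs with hcc
  · have hJ : pj t1 t2 ≠ 0 := hpj i j t1 t2 hij hcc ▸ (jointProp_pos c hpt hphp hij t1 t2).ne'
    rw [hpj i j t1 t2 hij hcc]
    field_simp
  · rw [jointProp_eq_mul_of_cluster_ne c (Set.Ioo_subset_Icc_self hpt)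
      (Set.Ioo_subset_Icc_self hphp) hcc, hp, hp]
    ring

lemma varHat_pairTerm_eq (hpt : pt ∈ Set.Ioo 0 1) (hphp : php ∈ Set.Ioo 0 1)
    (hp : ∀ i t, margProp pt php c i t = p t)
    (hpj : ∀ i j t1 t2, i ≠ j → c i = c j → jointProp pt php c i j t1 t2 = pj t1 t2)
    (t : Bool) (i j : Fin N) :
    (1 / p t ^ 2 - 1 / pj t t)
        * (if c i = c j then Y i t * Y j t * jointProp pt php c i j t t else 0)
      + (1 / pj t t - 1 / p t) * (if i = j then Y i t ^ 2 * p t else 0)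
      = Y i t / p t * (Y j t / p t) * (jointProp pt php c i j t t - p t * p t) := by
  rcases eq_or_ne i j with rfl | hij
  · have h : p t ≠ 0 := hp i t ▸ (margProp_pos c hpt hphp i t).ne'
    simp only [jointProp_self, hp, if_true]
    field_simp
    ring
  · rw [sq, clusterPairTerm_eq_of_ne hpt hphp hp hpj hij, if_neg hij]
    ring

lemma covHat_pairTerm_le (hpt : pt ∈ Set.Ioo 0 1) (hphp : php ∈ Set.Ioo 0 1)
    (hp : ∀ i t, margProp pt php c i t = p t)
    (hpj : ∀ i j t1 t2, i ≠ j → c i = c j → jointProp pt php c i j t1 t2 = pj t1 t2)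
    {t1 t2 : Bool} (ht : t1 ≠ t2) (i j : Fin N) :
    (1 / (p t1 * p t2) - 1 / pj t1 t2)
        * (if c i = c j then Y i t1 * Y j t2 * jointProp pt php c i j t1 t2 else 0)
      - (if i = j then Y i t1 ^ 2 * p t1 else 0) / (2 * p t1)
      - (if i = j then Y i t2 ^ 2 * p t2 else 0) / (2 * p t2)
      ≤ Y i t1 / p t1 * (Y j t2 / p t2) * (jointProp pt php c i j t1 t2 - p t1 * p t2) := by
  rcases eq_or_ne i j with rfl | hij
  · have h1 : p t1 ≠ 0 := hp i t1 ▸ (margProp_pos c hpt hphp i t1).ne'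
    have h2 : p t2 ≠ 0 := hp i t2 ▸ (margProp_pos c hpt hphp i t2).ne'
    have hlhs : (1 / (p t1 * p t2) - 1 / pj t1 t2) * (Y i t1 * Y i t2 * 0)
        - Y i t1 ^ 2 * p t1 / (2 * p t1) - Y i t2 ^ 2 * p t2 / (2 * p t2)
        = -(Y i t1 ^ 2 + Y i t2 ^ 2) / 2 := by
      field_simp
      ring
    have hrhs : Y i t1 / p t1 * (Y i t2 / p t2) * (0 - p t1 * p t2) = -(Y i t1 * Y i t2) := by
      field_simp
      ring
    simp only [jointProp_self, if_neg ht, if_true, hlhs, hrhs]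
    nlinarith [sq_nonneg (Y i t1 - Y i t2)]
  · simp only [clusterPairTerm_eq_of_ne hpt hphp hp hpj hij, if_neg hij, zero_div, sub_zero,
      le_refl]

lemma integral_varHat (hpt : pt ∈ Set.Ioo 0 1) (hphp : php ∈ Set.Ioo 0 1)
    (hp : ∀ i t, margProp pt php c i t = p t)
    (hpj : ∀ i j t1 t2, i ≠ j → c i = c j → jointProp pt php c i j t1 t2 = pj t1 t2)
    (t : Bool) :
    ∫ ω, varHat c Y p pj t ω ∂designMeasure C N pt php
      = cov[htEst pt php c Y t, htEst pt php c Y t; designMeasure C N pt php] := by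
  rw [covariance_htEst c Y (Set.Ioo_subset_Icc_self hpt) (Set.Ioo_subset_Icc_self hphp)]
  simp only [varHat, integral_const_mul, integral_add Integrable.of_finite Integrable.of_finite,
    integral_sum_Shat, integral_Qhat, hp, ← varHat_pairTerm_eq hpt hphp hp hpj,
    sum_add_distrib, ← mul_sum, sum_ite_eq, mem_univ, if_true]
  ring

lemma integral_covHat_le (hpt : pt ∈ Set.Ioo 0 1) (hphp : php ∈ Set.Ioo 0 1)
    (hp : ∀ i t, margProp pt php c i t = p t)
    (hpj : ∀ i j t1 t2, i ≠ j → c i = c j → jointProp pt php c i j t1 t2 = pj t1 t2)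
    {t1 t2 : Bool} (ht : t1 ≠ t2) :
    ∫ ω, covHat c Y p pj t1 t2 ω ∂designMeasure C N pt php
      ≤ cov[htEst pt php c Y t1, htEst pt php c Y t2; designMeasure C N pt php] := by
  calc ∫ ω, covHat c Y p pj t1 t2 ω ∂designMeasure C N pt php
      = (1 / (N : ℝ)) ^ 2 * ∑ i, ∑ j, ((1 / (p t1 * p t2) - 1 / pj t1 t2)
          * (if c i = c j then Y i t1 * Y j t2 * jointProp pt php c i j t1 t2 else 0)
        - (if i = j then Y i t1 ^ 2 * p t1 else 0) / (2 * p t1)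
        - (if i = j then Y i t2 ^ 2 * p t2 else 0) / (2 * p t2)) := by
        simp only [covHat, integral_const_mul, integral_sub Integrable.of_finite
          Integrable.of_finite, integral_div, integral_sum_Shat, integral_Qhat, hp,
          sum_sub_distrib, ← sum_div, ← mul_sum, sum_ite_eq, mem_univ, if_true]
        ring
    _ ≤ (1 / (N : ℝ)) ^ 2 * ∑ i, ∑ j,
          Y i t1 / p t1 * (Y j t2 / p t2) * (jointProp pt php c i j t1 t2 - p t1 * p t2) := by
        gcongr with i _ j _
        exact covHat_pairTerm_le hpt hphp hp hpj ht i j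
    _ = cov[htEst pt php c Y t1, htEst pt php c Y t2; designMeasure C N pt php] := by
        rw [covariance_htEst c Y (Set.Ioo_subset_Icc_self hpt) (Set.Ioo_subset_Icc_self hphp)]
        simp only [hp]

end Conservative

theorem ate_variance_estimator_conservative_general
    {C : Type*} [Fintype C] [DecidableEq C] {N : ℕ}
    (pt php : ℝ) (hpt0 : 0 < pt) (hpt1 : pt < 1) (hphp0 : 0 < php) (hphp1 : php < 1)
    (c : Fin N → C) (Y : Fin N → Bool → ℝ)
    (p : Bool → ℝ) (hp : ∀ (i : Fin N) (t : Bool), margProp pt php c i t = p t)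
    (pj : Bool → Bool → ℝ)
    (hpj : ∀ (i j : Fin N) (t1 t2 : Bool), i ≠ j → c i = c j →
      jointProp pt php c i j t1 t2 = pj t1 t2) :
    variance (fun ω => htEst pt php c Y true ω - htEst pt php c Y false ω)
        (designMeasure C N pt php)
      ≤ ∫ ω, (varHat c Y p pj true ω + varHat c Y p pj false ω
          - 2 * covHat c Y p pj true false ω) ∂(designMeasure C N pt php) := by
  have hpt : pt ∈ Set.Ioo 0 1 := ⟨hpt0, hpt1⟩
  have hphp : php ∈ Set.Ioo 0 1 := ⟨hphp0, hphp1⟩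
  rw [variance_fun_sub MemLp.of_discrete MemLp.of_discrete,
    ← covariance_self Measurable.of_discrete.aemeasurable,
    ← covariance_self Measurable.of_discrete.aemeasurable,
    integral_sub Integrable.of_finite Integrable.of_finite,
    integral_add Integrable.of_finite Integrable.of_finite, integral_const_mul,
    integral_varHat hpt hphp hp hpj, integral_varHat hpt hphp hp hpj]
  linarith [integral_covHat_le hpt hphp hp hpj (Y := Y) (t1 := true) (t2 := false) (by decide)]

/-- Under the hole-punching graph-cluster randomization design with `0 < p_t < 1` and
`0 < p_hp < 1`, if all potential outcomes are non-negative then the plug-in variance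
estimator `V̂ar[τ̂] = V̂ar[μ̂(1)] + V̂ar[μ̂(0)] − 2·Ĉov[μ̂(1), μ̂(0)]` for
`τ̂ = μ̂(1) − μ̂(0)` is conservative: `E[V̂ar[τ̂]] ≥ Var[τ̂]`. -/
theorem ate_variance_estimator_conservative
    {C : Type*} [Fintype C] [DecidableEq C] {N : ℕ} (hN : 1 ≤ N)
    (pt php : ℝ) (hpt0 : 0 < pt) (hpt1 : pt < 1) (hphp0 : 0 < php) (hphp1 : php < 1)
    (c : Fin N → C) (Y : Fin N → Bool → ℝ) (hY : ∀ (i : Fin N) (t : Bool), 0 ≤ Y i t)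
    (p : Bool → ℝ) (hp : ∀ (i : Fin N) (t : Bool), margProp pt php c i t = p t)
    (pj : Bool → Bool → ℝ)
    (hpj : ∀ (i j : Fin N) (t1 t2 : Bool), i ≠ j → c i = c j →
      jointProp pt php c i j t1 t2 = pj t1 t2) :
    variance (fun ω => htEst pt php c Y true ω - htEst pt php c Y false ω)
        (designMeasure C N pt php)
      ≤ ∫ ω, (varHat c Y p pj true ω + varHat c Y p pj false ω
          - 2 * covHat c Y p pj true false ω) ∂(designMeasure C N pt php) :=
  ate_variance_estimator_conservative_general pt php hpt0 hpt1 hphp0 hphp1 c Y p hp pj hpj
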